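/- For the maximally coherent state ρ = (1/d) Σ_{i,j=0}^{d-1} |i⟩⟨j| on ℂ^d, the minimal trace-norm distance from ρ to the set of diagonal density matrices equals 2 − 2/d. -/

import Mathlib

/-!
The diagonal state `1/d` is optimal: `ρ - 1/d = (1 - 1/d) ρ - (1/d) (1 - ρ)` is a combination of
the complementary projections `ρ` and `1 - ρ`, so its trace norm is `(1 - 1/d) + (d - 1)/d`.
Conversely, `2ρ - 1` is a self-adjoint contraction, so for every incoherent state `σ`,
`‖ρ - σ‖₁ ≥ Re tr ((ρ - σ) (2ρ - 1)) = 2 - 2 tr (σ ρ) = 2 - 2/d`; the last step holds because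
`σ` is diagonal and `ρ` has constant diagonal `1/d`.
-/

open Matrix
open scoped ComplexOrder

/-- The trace norm ‖M‖₁ = Tr√(M†M). -/
noncomputable def traceNorm {n : Type*} [Fintype n] [DecidableEq n]
    (M : Matrix n n ℂ) : ℝ :=
  (((Matrix.posSemidef_conjTranspose_mul_self M).1.eigenvectorUnitary.1 *
      Matrix.diagonal (((↑) : ℝ → ℂ) ∘ (Real.sqrt ∘ (Matrix.posSemidef_conjTranspose_mul_self M).1.eigenvalues)) *
      (star (Matrix.posSemidef_conjTranspose_mul_self M).1.eigenvectorUnitary : Matrix n n ℂ)).trace).re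

/-- A density matrix: positive semidefinite with unit trace. -/
def IsDensity {n : Type*} [Fintype n] (ρ : Matrix n n ℂ) : Prop :=
  ρ.PosSemidef ∧ ρ.trace = 1

section TraceNorm

variable {n : Type*} [Fintype n]

theorem IsStarProjection.posSemidef {𝕜 : Type*} [RCLike 𝕜] {P : Matrix n n 𝕜}
    (hP : IsStarProjection P) : P.PosSemidef := by
  have hPP : Pᴴ * P = P := by
    rw [← star_eq_conjTranspose, hP.isSelfAdjoint.star_eq, hP.isIdempotentElem.eq]
  exact hPP ▸ posSemidef_conjTranspose_mul_self P

variable [DecidableEq n]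

theorem traceNorm_eq_re_trace_of_sq_eq {M S : Matrix n n ℂ} (hS : S.PosSemidef)
    (h : S ^ 2 = Mᴴ * M) : traceNorm M = S.trace.re := by
  have hH := (posSemidef_conjTranspose_mul_self M).1
  suffices hH.cfc Real.sqrt = S by rw [← this]; rfl
  rw [← hH.cfc_eq, ← h, ← cfc_comp_pow Real.sqrt 2 S Real.continuous_sqrt.continuousOn
    hS.1.isSelfAdjoint]
  conv_rhs => rw [← cfc_id ℝ S hS.1.isSelfAdjoint]
  refine cfc_congr fun x hx => ?_
  obtain ⟨i, rfl⟩ := hS.1.spectrum_real_eq_range_eigenvalues ▸ hx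
  simp [Real.sqrt_sq (hS.eigenvalues_nonneg i)]

theorem traceNorm_eq_sum_abs_eigenvalues {M : Matrix n n ℂ} (hM : M.IsHermitian) :
    traceNorm M = ∑ i, |hM.eigenvalues i| := by
  have hS : (hM.cfc abs).PosSemidef :=
    (PosSemidef.diagonal fun i => by simp).mul_mul_conjTranspose_same _
  have hsq : hM.cfc abs ^ 2 = Mᴴ * M := by
    rw [← hM.cfc_eq, ← cfc_pow .., hM.eq, ← sq, ← cfc_pow_id (R := ℝ) M 2 hM.isSelfAdjoint]
    exact cfc_congr fun x _ => sq_abs x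
  rw [traceNorm_eq_re_trace_of_sq_eq hS hsq, IsHermitian.cfc, Unitary.conjStarAlgAut_apply,
    trace_mul_cycle, Unitary.star_mul_self_of_mem hM.eigenvectorUnitary.2, one_mul,
    trace_diagonal]
  simp

theorem Matrix.trace_diagonal_mul {R : Type*} [CommRing R] (v : n → R) (N : Matrix n n R) :
    (diagonal v * N).trace = ∑ i, v i * N i i := by
  simp [trace, diagonal_mul]

/-- Duality bound: in the eigenbasis `uᵢ` of `M`, `Re tr (M A) = ∑ λᵢ Re ⟪uᵢ, A uᵢ⟫`, and each
compression `Re ⟪uᵢ, A uᵢ⟫` lies in `[-1, 1]`. -/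
theorem re_trace_mul_le_traceNorm {M A : Matrix n n ℂ} (hM : M.IsHermitian)
    (hA : ∀ v : n → ℂ, |(star v ⬝ᵥ A *ᵥ v).re| ≤ (star v ⬝ᵥ v).re) :
    (M * A).trace.re ≤ traceNorm M := by
  set U : Matrix n n ℂ := (hM.eigenvectorUnitary : Matrix n n ℂ)
  have hUU : Uᴴ * U = 1 := Unitary.star_mul_self_of_mem hM.eigenvectorUnitary.2
  have htrace : (M * A).trace = ∑ i, (hM.eigenvalues i : ℂ) * (Uᴴ * A * U) i i := by
    conv_lhs => rw [hM.spectral_theorem, Unitary.conjStarAlgAut_apply]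
    rw [show U * diagonal _ * star U * A = U * (diagonal _ * (Uᴴ * A)) by
        simp only [Matrix.mul_assoc]; rfl,
      trace_mul_comm, Matrix.mul_assoc, trace_diagonal_mul]
    rfl
  have hcompress : ∀ i, |((Uᴴ * A * U) i i).re| ≤ 1 := fun i => by
    have hrow : Uᴴ i = star (Uᵀ i) := rfl
    have hunit : star (Uᵀ i) ⬝ᵥ Uᵀ i = 1 := by
      rw [← hrow, ← one_apply_eq (α := ℂ) i, ← hUU, mul_apply']; rfl
    simpa [mul_mul_apply, hrow, hunit] using hA (Uᵀ i)
  rw [traceNorm_eq_sum_abs_eigenvalues hM, htrace, Complex.re_sum]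
  refine Finset.sum_le_sum fun i _ => ?_
  rw [Complex.re_ofReal_mul]
  calc hM.eigenvalues i * ((Uᴴ * A * U) i i).re
      ≤ |hM.eigenvalues i| * |((Uᴴ * A * U) i i).re| := by rw [← abs_mul]; exact le_abs_self _
    _ ≤ |hM.eigenvalues i| := mul_le_of_le_one_right (abs_nonneg _) (hcompress i)

theorem IsStarProjection.abs_re_dotProduct_two_mul_sub_one_mulVec_le {P : Matrix n n ℂ}
    (hP : IsStarProjection P) (v : n → ℂ) :
    |(star v ⬝ᵥ (2 * P - 1) *ᵥ v).re| ≤ (star v ⬝ᵥ v).re := by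
  have hp := (Complex.le_def.mp (hP.posSemidef.dotProduct_mulVec_nonneg v)).1
  have hq := (Complex.le_def.mp (hP.one_sub.posSemidef.dotProduct_mulVec_nonneg v)).1
  simp only [two_mul, add_sub_assoc, add_mulVec, sub_mulVec, one_mulVec, dotProduct_add,
    dotProduct_sub, Complex.add_re, Complex.sub_re, Complex.zero_re] at hp hq ⊢
  rw [abs_le]
  constructor <;> linarith

/-- `|a P + b (1 - P)| = |a| P + |b| (1 - P)`, because `P (1 - P) = (1 - P) P = 0`. -/
theorem IsStarProjection.traceNorm_smul_add_smul_one_sub {P : Matrix n n ℂ}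
    (hP : IsStarProjection P) (a b : ℝ) :
    traceNorm ((a : ℂ) • P + (b : ℂ) • (1 - P)) = |a| * P.trace.re + |b| * (1 - P).trace.re := by
  have expand : ∀ x y x' y' : ℂ, (x • P + y • (1 - P)) * (x' • P + y' • (1 - P))
      = (x * x') • P + (y * y') • (1 - P) := fun x y x' y' => by
    simp only [add_mul, mul_add, smul_mul_smul, hP.isIdempotentElem.eq,
      hP.one_sub.isIdempotentElem.eq, hP.mul_one_sub_self, hP.one_sub_mul_self, smul_zero,
      add_zero, zero_add]
  have hS : (((|a| : ℝ) : ℂ) • P + ((|b| : ℝ) : ℂ) • (1 - P)).PosSemidef := by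
    refine (hP.posSemidef.smul ?_).add (hP.one_sub.posSemidef.smul ?_) <;>
      exact_mod_cast abs_nonneg _
  have hself : ((a : ℂ) • P + (b : ℂ) • (1 - P))ᴴ = (a : ℂ) • P + (b : ℂ) • (1 - P) := by
    simp [hP.isSelfAdjoint.star_eq, hP.one_sub.isSelfAdjoint.star_eq,
      ← star_eq_conjTranspose]
  have hsq : (((|a| : ℝ) : ℂ) • P + ((|b| : ℝ) : ℂ) • (1 - P)) ^ 2
      = ((a : ℂ) • P + (b : ℂ) • (1 - P))ᴴ * ((a : ℂ) • P + (b : ℂ) • (1 - P)) := by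
    rw [hself, sq, expand, expand]
    congr 2 <;> exact_mod_cast abs_mul_abs_self _
  rw [traceNorm_eq_re_trace_of_sq_eq hS hsq]
  simp [trace_add, trace_smul]

end TraceNorm

noncomputable def maxCoherentState (d : ℕ) : Matrix (Fin d) (Fin d) ℂ :=
  of fun _ _ => (1 / d : ℂ)

section MaxCoherentState

variable {d : ℕ}

theorem isStarProjection_maxCoherentState (hd : d ≠ 0) :
    IsStarProjection (maxCoherentState d) where
  isIdempotentElem := by
    ext i j
    simp only [maxCoherentState, mul_apply, of_apply, Finset.sum_const, Finset.card_univ,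
      Fintype.card_fin, nsmul_eq_mul]
    field_simp
  isSelfAdjoint := by
    ext i j
    simp [maxCoherentState]

theorem trace_maxCoherentState (hd : d ≠ 0) : (maxCoherentState d).trace = 1 := by
  simp only [trace, maxCoherentState, diag_apply, of_apply, Finset.sum_const, Finset.card_univ,
    Fintype.card_fin, nsmul_eq_mul]
  field_simp

theorem trace_mul_maxCoherentState_of_isDiag {σ : Matrix (Fin d) (Fin d) ℂ} (hσ : σ.IsDiag) :
    (σ * maxCoherentState d).trace = σ.trace / d := by
  rw [← hσ.diagonal_diag, trace_diagonal_mul, trace_diagonal, Finset.sum_div]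
  simp [maxCoherentState, div_eq_mul_inv]

theorem trace_maxCoherentState_sub_mul (hd : d ≠ 0) {σ : Matrix (Fin d) (Fin d) ℂ}
    (hσ : σ.IsDiag) (htr : σ.trace = 1) :
    ((maxCoherentState d - σ) * (2 * maxCoherentState d - 1)).trace = 2 - 2 / (d : ℂ) := by
  have hρρ := (isStarProjection_maxCoherentState hd).isIdempotentElem.eq
  simp only [two_mul, mul_sub, sub_mul, mul_add, mul_one, hρρ, trace_sub, trace_add,
    trace_maxCoherentState hd, trace_mul_maxCoherentState_of_isDiag hσ, htr]
  ring

theorem traceNorm_maxCoherentState_sub_smul_one (hd : d ≠ 0) :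
    traceNorm (maxCoherentState d - (1 / d : ℂ) • 1) = 2 - 2 / d := by
  have hρ := isStarProjection_maxCoherentState hd
  have hdecomp : maxCoherentState d - (1 / d : ℂ) • 1
      = ((1 - 1 / d : ℝ) : ℂ) • maxCoherentState d
        + ((-(1 / d) : ℝ) : ℂ) • (1 - maxCoherentState d) := by
    push_cast
    module
  have hle : 1 / (d : ℝ) ≤ 1 := by
    rw [div_le_one (by positivity)]
    exact_mod_cast Nat.one_le_iff_ne_zero.mpr hd
  rw [hdecomp, hρ.traceNorm_smul_add_smul_one_sub, trace_sub, trace_one,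
    trace_maxCoherentState hd, abs_of_nonneg (sub_nonneg.mpr hle), abs_neg,
    abs_of_nonneg (by positivity)]
  simp only [Complex.one_re, mul_one, Fintype.card_fin, Complex.sub_re, Complex.natCast_re]
  field_simp
  ring

end MaxCoherentState

/-- For the maximally coherent state ρ = (1/d) Σ_{i,j} |i⟩⟨j| on ℂ^d, the minimal
trace-norm distance to the diagonal (incoherent) density matrices equals 2 − 2/d. -/
theorem stmt_8 (d : ℕ) (hd : 0 < d) :
    IsLeast {x : ℝ | ∃ σ : Matrix (Fin d) (Fin d) ℂ,
        IsDensity σ ∧ σ.IsDiag ∧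
        x = traceNorm ((Matrix.of fun _ _ : Fin d => (1 / d : ℂ)) - σ)}
      (2 - 2 / d) := by
  have hd0 : d ≠ 0 := hd.ne'
  have hρ := isStarProjection_maxCoherentState hd0
  refine ⟨⟨(1 / d : ℂ) • 1, ⟨PosSemidef.one.smul ?_, ?_⟩, isDiag_one.smul _,
    (traceNorm_maxCoherentState_sub_smul_one hd0).symm⟩, ?_⟩
  · positivity
  · simp [trace_smul, hd0]
  rintro _ ⟨σ, ⟨hσ, htr⟩, hdiag, rfl⟩
  calc (2 - 2 / d : ℝ)
      = ((maxCoherentState d - σ) * (2 * maxCoherentState d - 1)).trace.re := by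
        rw [trace_maxCoherentState_sub_mul hd0 hdiag htr]
        simp
    _ ≤ traceNorm (maxCoherentState d - σ) :=
        re_trace_mul_le_traceNorm (hρ.isSelfAdjoint.sub hσ.isHermitian)
          hρ.abs_re_dotProduct_two_mul_sub_one_mulVec_le
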